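/- arXiv:1806.01419 — 6 statements merged into one kernel-verified Lean document; each statement's English description precedes it below -/
import Mathlib

section
/- Let R_d(k_p) = [[2R_s + 2k_p, (L_d - L_q) ω*, -L_d x₂*], [(L_d - L_q) ω*, 2R_s + 2k_p, 0], [-L_d x₂*, 0, 2 R_m / n_p]]. Then R_d(k_p) is positive definite if and only if (R_s + k_p) I₂ - ½ [[n_p L_d² (x₂*)² / (2 R_m), (L_q - L_d) ω*], [(L_q - L_d) ω*, 0]] is positive definite. In particular there exists k_p^min ∈ ℝ such that R_d(k_p) > 0 for all k_p ≥ k_p^min. -/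
open Matrix

private lemma pmsm_aux (Rs kp a b x y : ℝ) (hRs : 0 < Rs) (ha0 : 0 ≤ a)
    (hkp : a / 2 + |b| ≤ kp) (hxy : x ≠ 0 ∨ y ≠ 0) :
    0 < (Rs + kp - a / 2) * x ^ 2 - b * x * y + (Rs + kp) * y ^ 2 := by
  have hab : b ≤ |b| := le_abs_self b
  have hab' : -b ≤ |b| := neg_le_abs b
  have hbb : 2 * b * x * y ≤ |b| * (x ^ 2 + y ^ 2) := by
    nlinarith [mul_nonneg (by linarith : (0:ℝ) ≤ |b| - b) (sq_nonneg (x + y)),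
      mul_nonneg (by linarith : (0:ℝ) ≤ |b| + b) (sq_nonneg (x - y))]
  have ht : 0 < x ^ 2 + y ^ 2 := by
    rcases hxy with h | h
    · nlinarith [sq_nonneg y, pow_pos (abs_pos.mpr h) 2, sq_abs x]
    · nlinarith [sq_nonneg x, pow_pos (abs_pos.mpr h) 2, sq_abs y]
  nlinarith [hbb, mul_nonneg (by linarith : (0:ℝ) ≤ kp - a / 2 - |b|) (sq_nonneg x),
    mul_nonneg (show (0:ℝ) ≤ kp - |b| by nlinarith [abs_nonneg b]) (sq_nonneg y),
    mul_pos hRs ht]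


/-- `R_d(k_p) > 0` iff `(R_s + k_p) I₂ - ½ [[n_p L_d² x₂*²/(2R_m), (L_q-L_d)ω*],
[(L_q-L_d)ω*, 0]] > 0`; in particular there exists a `k_p^min` such that
`R_d(k_p) > 0` for all `k_p ≥ k_p^min`. -/
theorem pmsm_Rd_posdef_iff
    (Rs Rm np Ld Lq : ℝ) (hRs : 0 < Rs) (hRm : 0 < Rm) (hnp : 0 < np)
    (hLd : 0 < Ld) (hLq : 0 < Lq) (ωs x2s : ℝ)
    (Rd : ℝ → Matrix (Fin 3) (Fin 3) ℝ)
    (hRd : ∀ kp, Rd kp =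
      !![2 * Rs + 2 * kp, (Ld - Lq) * ωs, -Ld * x2s;
         (Ld - Lq) * ωs, 2 * Rs + 2 * kp, 0;
         -Ld * x2s, 0, 2 * Rm / np]) :
    (∀ kp, (Rd kp).PosDef ↔
      ((Rs + kp) • (1 : Matrix (Fin 2) (Fin 2) ℝ)
        - (1 / 2 : ℝ) • !![np * Ld ^ 2 * x2s ^ 2 / (2 * Rm), (Lq - Ld) * ωs;
                           (Lq - Ld) * ωs, 0]).PosDef) ∧
    (∃ kpmin : ℝ, ∀ kp, kpmin ≤ kp → (Rd kp).PosDef) := by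
  have hRm' : Rm ≠ 0 := hRm.ne'
  have hnp' : np ≠ 0 := hnp.ne'
  set a : ℝ := np * Ld ^ 2 * x2s ^ 2 / (2 * Rm) with ha
  set b : ℝ := (Lq - Ld) * ωs with hb
  set c : ℝ := np * Ld * x2s / (2 * Rm) with hc
  -- quadratic form of the 2x2 matrix
  have hM : ∀ kp, ((Rs + kp) • (1 : Matrix (Fin 2) (Fin 2) ℝ)
        - (1 / 2 : ℝ) • !![a, b; b, 0]) = !![Rs + kp - a/2, -b/2; -b/2, Rs + kp] := by
    intro kp
    ext i j
    fin_cases i <;> fin_cases j <;>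
      simp [Matrix.one_apply, Matrix.smul_apply] <;> ring
  have hQ2 : ∀ kp (u : Fin 2 → ℝ),
      u ⬝ᵥ ((!![Rs + kp - a/2, -b/2; -b/2, Rs + kp] : Matrix (Fin 2) (Fin 2) ℝ) *ᵥ u)
      = (Rs + kp - a/2) * (u 0)^2 - b * (u 0) * (u 1) + (Rs + kp) * (u 1)^2 := by
    intro kp u
    simp [Matrix.mulVec, dotProduct, Fin.sum_univ_two]
    ring
  have hQ3 : ∀ kp (x : Fin 3 → ℝ),
      x ⬝ᵥ ((Rd kp) *ᵥ x)
      = 2 * ((Rs + kp - a/2) * (x 0)^2 - b * (x 0) * (x 1) + (Rs + kp) * (x 1)^2)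
        + (2 * Rm / np) * (x 2 - c * x 0)^2 := by
    intro kp x
    rw [hRd]
    simp [Matrix.mulVec, dotProduct, Fin.sum_univ_three, ha, hb, hc]
    field_simp
    ring
  have hMherm : ∀ kp, (!![Rs + kp - a/2, -b/2; -b/2, Rs + kp] :
      Matrix (Fin 2) (Fin 2) ℝ).IsHermitian := by
    intro kp
    rw [Matrix.IsHermitian]
    ext i j
    fin_cases i <;> fin_cases j <;> simp
  have hRdherm : ∀ kp, (Rd kp).IsHermitian := by
    intro kp
    rw [Matrix.IsHermitian, hRd]
    ext i j
    fin_cases i <;> fin_cases j <;> simp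
  have hiff : ∀ kp, (Rd kp).PosDef ↔
      (!![Rs + kp - a/2, -b/2; -b/2, Rs + kp] : Matrix (Fin 2) (Fin 2) ℝ).PosDef := by
    intro kp
    rw [posDef_iff_dotProduct_mulVec, posDef_iff_dotProduct_mulVec]
    constructor
    · rintro ⟨-, h⟩
      refine ⟨hMherm kp, fun u hu => ?_⟩
      have hx : (![u 0, u 1, c * u 0] : Fin 3 → ℝ) ≠ 0 := by
        intro h0
        apply hu
        ext i
        fin_cases i
        · exact congrFun h0 0
        · exact congrFun h0 1
      have := h hx
      rw [star_trivial, hQ3] at this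
      rw [star_trivial, hQ2]
      simp at this
      nlinarith [this]
    · rintro ⟨-, h⟩
      refine ⟨hRdherm kp, fun x hx => ?_⟩
      rw [star_trivial, hQ3]
      by_cases hu : (![x 0, x 1] : Fin 2 → ℝ) = 0
      · have h0 : x 0 = 0 := congrFun hu 0
        have h1 : x 1 = 0 := congrFun hu 1
        have h2 : x 2 ≠ 0 := by
          intro h2; apply hx; ext i; fin_cases i <;> assumption
        have : 0 < (2 * Rm / np) := by positivity
        rw [h0, h1]
        have h2sq : 0 < (x 2 - c * 0)^2 := by
          simpa using pow_pos (abs_pos.mpr h2) 2 |>.trans_eq (by rw [sq_abs])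
        nlinarith [this, h2sq]
      · have := h hu
        rw [star_trivial, hQ2] at this
        simp at this
        have hsq : 0 ≤ (2 * Rm / np) * (x 2 - c * x 0)^2 := by positivity
        nlinarith [this, hsq]
  constructor
  · intro kp
    rw [hiff kp, hM kp]
  · refine ⟨a/2 + |b|, fun kp hkp => ?_⟩
    rw [hiff kp]
    refine posDef_iff_dotProduct_mulVec.mpr ⟨hMherm kp, fun u hu => ?_⟩
    rw [star_trivial, hQ2]
    have h01 : u 0 ≠ 0 ∨ u 1 ≠ 0 := by
      by_contra h
      push_neg at h
      exact hu (by ext i; fin_cases i <;> simp [h.1, h.2])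
    have hab : |b| ≥ b := le_abs_self b
    have hab' : |b| ≥ -b := neg_le_abs b
    have ha0 : 0 ≤ a := by positivity
    exact pmsm_aux Rs kp a b (u 0) (u 1) hRs ha0 hkp h01
end

section
/- In the non-salient case L_d = L_q, the matrix R_d(k_p) = [[2R_s + 2k_p, 0, -L_d x₂*], [0, 2R_s + 2k_p, 0], [-L_d x₂*, 0, 2R_m/n_p]] is positive definite whenever k_p > (n_p L_d² (x₂*)²)/(4 R_m) - R_s. In particular, with x₂* = (τ_L + R_m ω*)/(n_p Φ), positive definiteness holds whenever k_p > L_d²(τ_L + R_m ω*)²/(4 R_m n_p Φ²) - R_s. -/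
open Matrix

lemma aux_posdef (a b c : ℝ) (ha : 0 < a) (h : b ^ 2 < a * c) :
    Matrix.PosDef !![a, 0, b; 0, a, 0; b, 0, c] := by
  rw [Matrix.posDef_iff_dotProduct_mulVec]
  constructor
  · ext i j
    fin_cases i <;> fin_cases j <;>
      simp [Matrix.conjTranspose_apply]
  · intro x hx
    have hx' : x 0 ≠ 0 ∨ x 1 ≠ 0 ∨ x 2 ≠ 0 := by
      by_contra hcon
      push_neg at hcon
      apply hx
      ext i
      fin_cases i <;> simp [hcon.1, hcon.2.1, hcon.2.2]
    have hq : (star x ⬝ᵥ !![a, 0, b; 0, a, 0; b, 0, c] *ᵥ x)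
        = a * x 0 ^ 2 + 2 * b * x 0 * x 2 + c * x 2 ^ 2 + a * x 1 ^ 2 := by
      simp [Matrix.mulVec, dotProduct, Fin.sum_univ_three]
      ring
    rw [hq]
    have haq : 0 < a * (a * x 0 ^ 2 + 2 * b * x 0 * x 2 + c * x 2 ^ 2 + a * x 1 ^ 2) := by
      rcases hx' with h0 | h0 | h0
      · rcases eq_or_ne (x 2) 0 with h2z | h2z
        · rw [h2z]
          nlinarith [mul_pos (mul_pos ha ha) (by positivity : (0:ℝ) < x 0 ^ 2),
            mul_nonneg (mul_pos ha ha).le (sq_nonneg (x 1))]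
        · nlinarith [mul_pos (sub_pos.mpr h) (by positivity : (0:ℝ) < x 2 ^ 2),
            sq_nonneg (a * x 0 + b * x 2), sq_nonneg (a * x 1)]
      · nlinarith [mul_pos (mul_pos ha ha) (by positivity : (0:ℝ) < x 1 ^ 2),
          sq_nonneg (a * x 0 + b * x 2), mul_nonneg (sub_pos.mpr h).le (sq_nonneg (x 2))]
      · nlinarith [mul_pos (sub_pos.mpr h) (by positivity : (0:ℝ) < x 2 ^ 2),
          sq_nonneg (a * x 0 + b * x 2), sq_nonneg (a * x 1)]
    by_contra hcon
    push_neg at hcon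
    nlinarith [mul_nonpos_of_nonneg_of_nonpos ha.le hcon]

/-- Non-salient case `L_d = L_q`: the matrix `R_d(k_p)` is positive definite whenever
`k_p > n_p L_d² x₂*²/(4 R_m) - R_s`; with `x₂* = (τ_L + R_m ω*)/(n_p Φ)` this holds
whenever `k_p > L_d² (τ_L + R_m ω*)²/(4 R_m n_p Φ²) - R_s`. -/
theorem pmsm_nonsalient_Rd_posdef
    (Rs Rm np Ld Φ : ℝ) (hRs : 0 < Rs) (hRm : 0 < Rm) (hnp : 0 < np)
    (hLd : 0 < Ld) (hΦ : 0 < Φ) (τL ωs : ℝ)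
    (x2s : ℝ) (hx2s : x2s = (τL + Rm * ωs) / (np * Φ))
    (Rd : ℝ → Matrix (Fin 3) (Fin 3) ℝ)
    (hRd : ∀ kp, Rd kp =
      !![2 * Rs + 2 * kp, 0, -Ld * x2s;
         0, 2 * Rs + 2 * kp, 0;
         -Ld * x2s, 0, 2 * Rm / np]) :
    (∀ kp, np * Ld ^ 2 * x2s ^ 2 / (4 * Rm) - Rs < kp → (Rd kp).PosDef) ∧
    (∀ kp, Ld ^ 2 * (τL + Rm * ωs) ^ 2 / (4 * Rm * np * Φ ^ 2) - Rs < kp →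
      (Rd kp).PosDef) := by
  have key : ∀ kp, np * Ld ^ 2 * x2s ^ 2 / (4 * Rm) - Rs < kp → (Rd kp).PosDef := by
    intro kp hkp
    rw [hRd]
    apply aux_posdef
    · have : np * Ld ^ 2 * x2s ^ 2 / (4 * Rm) ≥ 0 := by positivity
      linarith
    · have h4 : (0:ℝ) < 4 * Rm := by linarith
      have hkp' : np * Ld ^ 2 * x2s ^ 2 < (Rs + kp) * (4 * Rm) := by
        rw [← div_lt_iff₀ h4]; linarith
      rw [show (2 * Rs + 2 * kp) * (2 * Rm / np) = (Rs + kp) * (4 * Rm) / np from by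
        field_simp; ring, lt_div_iff₀ hnp]
      nlinarith
  refine ⟨key, fun kp hkp => key kp ?_⟩
  have heq : np * Ld ^ 2 * x2s ^ 2 / (4 * Rm) =
      Ld ^ 2 * (τL + Rm * ωs) ^ 2 / (4 * Rm * np * Φ ^ 2) := by
    rw [hx2s]
    field_simp
  linarith [heq ▸ hkp]
end

section
/- (Global stability of the PI-controlled PMSM.) Suppose (x̃, x̃_c) : ℝ → ℝ³ × ℝ² is a solution of the closed-loop system obtained from the incremental PMSM model with PI feedback ũ = -K_I x̃_c - k_p ỹ, dx̃_c/dt = ỹ, where ỹ = Gᵀ x̃ and K_I > 0, k_p ∈ ℝ. Let W(x̃, x̃_c) = ½ x̃ᵀ D x̃ + ½ x̃_cᵀ K_I x̃_c. Then along solutions dW/dt = -½ x̃ᵀ R_d x̃, where R_d = [[2R_s + 2k_p, (L_d-L_q)ω*, -L_d x₂*], [(L_d-L_q)ω*, 2R_s+2k_p, 0], [-L_d x₂*, 0, 2R_m/n_p]]. In particular, if R_d is positive definite then W is nonincreasing along solutions. -/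
open Matrix

/-- Global stability of the PI-controlled PMSM: along solutions of the incremental
model with PI feedback `ũ = -K_I x̃_c - k_p ỹ`, `dx̃_c/dt = ỹ`, the function
`W = ½ x̃ᵀ D x̃ + ½ x̃_cᵀ K_I x̃_c` satisfies `Ẇ = -½ x̃ᵀ R_d x̃`; if `R_d > 0` then
`W` is nonincreasing along solutions. -/
theorem pmsm_pi_closed_loop_lyapunov
    (Ld Lq J np Φ Rs Rm kp : ℝ)
    (hLd : 0 < Ld) (hLq : 0 < Lq) (hJ : 0 < J) (hnp : 0 < np)
    (hΦ : 0 < Φ) (hRs : 0 < Rs) (hRm : 0 < Rm)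
    (D R : Matrix (Fin 3) (Fin 3) ℝ) (G : Matrix (Fin 3) (Fin 2) ℝ)
    (C : (Fin 3 → ℝ) → Matrix (Fin 3) (Fin 3) ℝ)
    (hD : D = !![Ld, 0, 0; 0, Lq, 0; 0, 0, J / np])
    (hR : R = !![Rs, 0, 0; 0, Rs, 0; 0, 0, Rm / np])
    (hG : G = !![1, 0; 0, 1; 0, 0])
    (hC : ∀ z : Fin 3 → ℝ, C z =
      !![0, 0, -Lq * z 1; 0, 0, Ld * z 0 + Φ; Lq * z 1, -(Ld * z 0 + Φ), 0])
    (x2s ωs : ℝ) (xs : Fin 3 → ℝ) (hxs : xs = ![0, x2s, ωs])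
    (KI : Matrix (Fin 2) (Fin 2) ℝ) (hKI : KI.PosDef)
    (Rd : Matrix (Fin 3) (Fin 3) ℝ)
    (hRdDef : Rd = !![2 * Rs + 2 * kp, (Ld - Lq) * ωs, -Ld * x2s;
                      (Ld - Lq) * ωs, 2 * Rs + 2 * kp, 0;
                      -Ld * x2s, 0, 2 * Rm / np])
    (xt : ℝ → Fin 3 → ℝ) (xt' : ℝ → Fin 3 → ℝ) (xc : ℝ → Fin 2 → ℝ)
    (ut : ℝ → Fin 2 → ℝ)
    (hx : ∀ t, HasDerivAt xt (xt' t) t)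
    (hxc : ∀ t, HasDerivAt xc (Gᵀ *ᵥ xt t) t)
    (hu : ∀ t, ut t = -(KI *ᵥ xc t) - kp • (Gᵀ *ᵥ xt t))
    (hode : ∀ t, D *ᵥ xt' t + C (xt t + xs) *ᵥ xt t
        + (C (xt t + xs) - C xs) *ᵥ xs + R *ᵥ xt t = G *ᵥ ut t) :
    (∀ t, HasDerivAt
        (fun s => (1 / 2) * (xt s ⬝ᵥ (D *ᵥ xt s)) + (1 / 2) * (xc s ⬝ᵥ (KI *ᵥ xc s)))
        (-(1 / 2) * (xt t ⬝ᵥ (Rd *ᵥ xt t))) t) ∧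
    (Rd.PosDef → Antitone
      (fun s => (1 / 2) * (xt s ⬝ᵥ (D *ᵥ xt s)) + (1 / 2) * (xc s ⬝ᵥ (KI *ᵥ xc s)))) := by
  have hsym : KI 0 1 = KI 1 0 := by
    have h := congrFun (congrFun hKI.1 1) 0
    simpa using h
  have key : ∀ t, HasDerivAt
      (fun s => (1 / 2) * (xt s ⬝ᵥ (D *ᵥ xt s)) + (1 / 2) * (xc s ⬝ᵥ (KI *ᵥ xc s)))
      (-(1 / 2) * (xt t ⬝ᵥ (Rd *ᵥ xt t))) t := by
    intro t
    have h0 : HasDerivAt (fun s => xt s 0) (xt' t 0) t := hasDerivAt_pi.1 (hx t) 0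
    have h1 : HasDerivAt (fun s => xt s 1) (xt' t 1) t := hasDerivAt_pi.1 (hx t) 1
    have h2 : HasDerivAt (fun s => xt s 2) (xt' t 2) t := hasDerivAt_pi.1 (hx t) 2
    have hc0 : HasDerivAt (fun s => xc s 0) (xt t 0) t := by
      have := hasDerivAt_pi.1 (hxc t) 0
      simpa [hG, Matrix.mulVec, dotProduct, Fin.sum_univ_three, Fin.sum_univ_two, Matrix.cons_val_zero, Matrix.cons_val_one, Matrix.head_cons, Matrix.vecHead, Matrix.vecTail, Function.comp, Matrix.transpose_apply, Pi.smul_apply, smul_eq_mul, Matrix.sub_apply, Pi.add_apply] using this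
    have hc1 : HasDerivAt (fun s => xc s 1) (xt t 1) t := by
      have := hasDerivAt_pi.1 (hxc t) 1
      simpa [hG, Matrix.mulVec, dotProduct, Fin.sum_univ_three, Fin.sum_univ_two, Matrix.cons_val_zero, Matrix.cons_val_one, Matrix.head_cons, Matrix.vecHead, Matrix.vecTail, Function.comp, Matrix.transpose_apply, Pi.smul_apply, smul_eq_mul, Matrix.sub_apply, Pi.add_apply] using this
    have hfun : (fun s => (1 / 2) * (xt s ⬝ᵥ (D *ᵥ xt s)) + (1 / 2) * (xc s ⬝ᵥ (KI *ᵥ xc s)))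
        = fun s => (1 / 2) * (Ld * (xt s 0 * xt s 0) + Lq * (xt s 1 * xt s 1)
            + (J / np) * (xt s 2 * xt s 2))
          + (1 / 2) * (KI 0 0 * (xc s 0 * xc s 0) + KI 0 1 * (xc s 0 * xc s 1)
            + KI 1 0 * (xc s 1 * xc s 0) + KI 1 1 * (xc s 1 * xc s 1)) := by
      funext s
      simp [hD, Matrix.mulVec, dotProduct, Fin.sum_univ_three, Fin.sum_univ_two, Matrix.cons_val_zero, Matrix.cons_val_one, Matrix.head_cons, Matrix.vecHead, Matrix.vecTail, Function.comp, Matrix.transpose_apply, Pi.smul_apply, smul_eq_mul, Matrix.sub_apply, Pi.add_apply]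
      ring
    rw [hfun]
    have hd := ((((h0.mul h0).const_mul Ld).add ((h1.mul h1).const_mul Lq)).add
        ((h2.mul h2).const_mul (J / np))).const_mul (1/2 : ℝ) |>.add
      (((((hc0.mul hc0).const_mul (KI 0 0)).add ((hc0.mul hc1).const_mul (KI 0 1))).add
        ((hc1.mul hc0).const_mul (KI 1 0)) |>.add
        ((hc1.mul hc1).const_mul (KI 1 1))).const_mul (1/2 : ℝ))
    refine hd.congr_deriv (Eq.symm ?_)
    have e := hode t
    rw [hu t] at e
    have e0 := congrFun e 0
    have e1 := congrFun e 1
    have e2 := congrFun e 2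
    simp [hD, hR, hG, hC, hxs, Matrix.mulVec, dotProduct, Fin.sum_univ_three, Fin.sum_univ_two, Matrix.cons_val_zero, Matrix.cons_val_one, Matrix.head_cons, Matrix.vecHead, Matrix.vecTail, Function.comp, Matrix.transpose_apply, Pi.smul_apply, smul_eq_mul, Matrix.sub_apply, Pi.add_apply] at e0 e1 e2
    simp [hRdDef, Matrix.mulVec, dotProduct, Fin.sum_univ_three, Fin.sum_univ_two, Matrix.cons_val_zero, Matrix.cons_val_one, Matrix.head_cons, Matrix.vecHead, Matrix.vecTail, Function.comp, Matrix.transpose_apply, Pi.smul_apply, smul_eq_mul, Matrix.sub_apply, Pi.add_apply]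
    linear_combination (-(xt t 0)) * e0 + (-(xt t 1)) * e1 + (-(xt t 2)) * e2
      + ((xt t 0 * xc t 1 - xt t 1 * xc t 0) / 2) * hsym
  refine ⟨key, fun hpd => ?_⟩
  apply antitone_of_deriv_nonpos (fun s => (key s).differentiableAt)
  intro s
  rw [(key s).deriv]
  have h := hpd.posSemidef.dotProduct_mulVec_nonneg (xt s)
  simp only [star_trivial] at h
  nlinarith
end

section
/- If φ : [0,∞) → ℝ is continuous and persistently exciting, i.e. there exist T, δ > 0 with ∫_t^{t+T} φ(s)² ds ≥ δ for all t ≥ 0, then any solution of ė = -γ φ² e with γ > 0 converges to zero exponentially: |e(t)| ≤ |e(0)| exp(γ δ) exp(-(γ δ / T) t) for all t ≥ 0. -/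
/-- Persistent excitation implies exponential convergence of `ė = -γ φ² e`:
`|e(t)| ≤ |e(0)| exp(γδ) exp(-(γδ/T) t)` for all `t ≥ 0`. -/
theorem gradient_estimator_pe_exponential
    (γ T δ : ℝ) (hγ : 0 < γ) (hT : 0 < T) (hδ : 0 < δ)
    (φ e : ℝ → ℝ) (hφ : Continuous φ)
    (hPE : ∀ t, 0 ≤ t → δ ≤ ∫ s in t..(t + T), (φ s) ^ 2)
    (he : ∀ t, 0 ≤ t → HasDerivAt e (-(γ * (φ t) ^ 2) * e t) t) :
    ∀ t, 0 ≤ t →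
      |e t| ≤ |e 0| * Real.exp (γ * δ) * Real.exp (-(γ * δ / T) * t) := by
  have hcont : Continuous fun s => (φ s) ^ 2 := hφ.pow 2
  set F : ℝ → ℝ := fun t => ∫ s in (0:ℝ)..t, (φ s) ^ 2 with hFdef
  have hFderiv : ∀ t, HasDerivAt F ((φ t) ^ 2) t := fun t =>
    (hcont.integral_hasStrictDerivAt 0 t).hasDerivAt
  have hFcont : Continuous F :=
    continuous_iff_continuousAt.2 fun x => (hFderiv x).continuousAt
  -- solution formula: e t * exp (γ * F t) = e 0 for t ≥ 0
  have hsol : ∀ t, 0 ≤ t → e t * Real.exp (γ * F t) = e 0 := by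
    intro t ht
    set g : ℝ → ℝ := fun u => e u * Real.exp (γ * F u) with hg
    have hgt : g t = g 0 := by
      refine constant_of_has_deriv_right_zero (f := g) (a := 0) (b := t)
        (ContinuousOn.mul (fun x hx => ((he x hx.1).continuousAt).continuousWithinAt)
          (Real.continuous_exp.comp (continuous_const.mul hFcont)).continuousOn)
        (fun x hx => ?_) t (Set.right_mem_Icc.2 ht)
      have hd : HasDerivAt g
          ((-(γ * (φ x) ^ 2) * e x) * Real.exp (γ * F x)
            + e x * (Real.exp (γ * F x) * (γ * (φ x) ^ 2))) x :=
        (he x hx.1).mul (((hFderiv x).const_mul γ).exp)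
      have hd0 : HasDerivAt g 0 x := by convert hd using 1; ring
      exact hd0.hasDerivWithinAt
    have hF0 : F 0 = 0 := by simp [hFdef]
    simpa [hg, hF0] using hgt
  -- lower bound on F via PE
  have hchunk : ∀ n : ℕ, ∀ t : ℝ, (n : ℝ) * T ≤ t → (n : ℝ) * δ ≤ F t := by
    intro n
    induction n with
    | zero =>
      intro t ht
      simp only [Nat.cast_zero, zero_mul] at ht ⊢
      exact intervalIntegral.integral_nonneg ht (fun s _ => sq_nonneg _)
    | succ n ih =>
      intro t ht
      have htT : (n : ℝ) * T ≤ t - T := by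
        push_cast at ht; nlinarith
      have h0 : (0:ℝ) ≤ t - T := le_trans (by positivity) htT
      have hsplit : F t = F (t - T) + ∫ s in (t - T)..t, (φ s) ^ 2 := by
        simp only [hFdef]
        rw [← intervalIntegral.integral_add_adjacent_intervals
          (hcont.intervalIntegrable 0 (t - T)) (hcont.intervalIntegrable (t - T) t)]
      have hpe := hPE (t - T) h0
      rw [sub_add_cancel] at hpe
      have := ih (t - T) htT
      push_cast
      linarith [hsplit ▸ (by linarith : (n : ℝ) * δ + δ ≤ F (t - T) + ∫ s in (t - T)..t, (φ s) ^ 2)]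
  have hFlb : ∀ t, 0 ≤ t → δ * t / T - δ ≤ F t := by
    intro t ht
    set n : ℕ := ⌊t / T⌋₊ with hn
    have hdiv : 0 ≤ t / T := div_nonneg ht hT.le
    have h1 : (n : ℝ) ≤ t / T := Nat.floor_le hdiv
    have h2 : t / T < n + 1 := Nat.lt_floor_add_one _
    have h3 : (n : ℝ) * T ≤ t := (le_div_iff₀ hT).1 h1
    have hc := hchunk n t h3
    have h4 : δ * t / T ≤ ((n:ℝ) + 1) * δ := by
      rw [div_le_iff₀ hT]; nlinarith [(div_lt_iff₀ hT).1 h2]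
    linarith
  -- finish
  intro t ht
  have hF := hFlb t ht
  have key := hsol t ht
  have hexp : Real.exp (-(γ * F t)) ≤ Real.exp (γ * δ) * Real.exp (-(γ * δ / T) * t) := by
    rw [← Real.exp_add]
    apply Real.exp_le_exp.2
    have h5 : (δ * t / T - δ) * γ ≤ F t * γ := mul_le_mul_of_nonneg_right hF hγ.le
    have h6 : (δ * t / T - δ) * γ = γ * δ / T * t - γ * δ := by ring
    linarith
  have habs : |e t| = |e 0| * Real.exp (-(γ * F t)) := by
    have hne : Real.exp (γ * F t) ≠ 0 := (Real.exp_pos _).ne'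
    have : e t = e 0 * Real.exp (-(γ * F t)) := by
      field_simp [Real.exp_neg] at *
      rw [← key, mul_assoc, ← Real.exp_add]; simp
    rw [this, abs_mul, abs_of_pos (Real.exp_pos _)]
  rw [habs, mul_assoc]
  exact mul_le_mul_of_nonneg_left hexp (abs_nonneg _)
end

section
/- For the PMSM equilibrium x₂* = (τ_L + R_m ω*)/(n_p Φ), if |τ_L| ≤ τ_L^max then |x₂*| ≤ (τ_L^max + R_m |ω*|)/(n_p Φ). Consequently, any k_p satisfying (R_s + k_p) > (n_p L_d²/(4 R_m)) ((τ_L^max + R_m|ω*|)/(n_p Φ))² + |L_q - L_d| |ω*| / 2 makes the matrix R_d = [[2R_s+2k_p, (L_d-L_q)ω*, -L_d x₂*], [(L_d-L_q)ω*, 2R_s+2k_p, 0], [-L_d x₂*, 0, 2R_m/n_p]] positive definite, uniformly over all τ_L with |τ_L| ≤ τ_L^max. -/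
open Matrix

lemma quad_pos_aux (a b c m : ℝ) (hm : 0 < m)
    (hα : |b| * m + c ^ 2 < 2 * a * m)
    (X Y Z : ℝ) (h : ¬(X = 0 ∧ Y = 0 ∧ Z = 0)) :
    0 < 2 * a * X ^ 2 + 2 * b * X * Y + 2 * a * Y ^ 2 - 2 * c * X * Z + m * Z ^ 2 := by
  set s : ℝ := if 0 ≤ b then 1 else -1 with hs
  have hsb : s * b = |b| := by
    rcases le_or_gt 0 b with hb | hb
    · simp [hs, hb, abs_of_nonneg hb]
    · simp [hs, not_le.mpr hb, abs_of_neg hb]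
  have hs2 : s ^ 2 = 1 := by rw [hs]; split_ifs <;> norm_num
  have habs : (0:ℝ) ≤ |b| := abs_nonneg b
  have hc2 : (0:ℝ) ≤ c ^ 2 := sq_nonneg c
  -- multiplied-by-m identity:
  -- m*q = (2a m - |b| m - c²) X² + (2a - |b|) m Y² + |b| m (X+sY)² + (mZ - cX)²
  have key : 0 < m * (2 * a * X ^ 2 + 2 * b * X * Y + 2 * a * Y ^ 2 - 2 * c * X * Z + m * Z ^ 2) := by
    have e1 : (0:ℝ) ≤ |b| * m * (X + s * Y) ^ 2 :=
      mul_nonneg (mul_nonneg habs hm.le) (sq_nonneg _)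
    have e2 : (0:ℝ) ≤ (m * Z - c * X) ^ 2 := sq_nonneg _
    rcases Classical.em (X = 0) with hX | hX
    · rcases Classical.em (Y = 0) with hY | hY
      · have hZ : Z ≠ 0 := by tauto
        have : 0 < Z ^ 2 := by positivity
        subst hX; subst hY
        nlinarith [mul_pos hm (mul_pos hm this)]
      · have hY2 : 0 < Y ^ 2 := by positivity
        subst hX
        nlinarith [mul_pos hm hY2, sq_nonneg Z]
    · have hX2 : 0 < X ^ 2 := by positivity
      have hY2 : (0:ℝ) ≤ Y ^ 2 := sq_nonneg Y
      have e1' : (0:ℝ) ≤ |b| * X ^ 2 + 2 * b * X * Y + |b| * Y ^ 2 := by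
        rcases le_or_gt 0 b with hb | hb
        · rw [abs_of_nonneg hb]; nlinarith [sq_nonneg (X + Y)]
        · rw [abs_of_neg hb]; nlinarith [sq_nonneg (X - Y)]
      have t1 : 0 < (2 * a * m - |b| * m - c ^ 2) * X ^ 2 :=
        mul_pos (by linarith) hX2
      have t2 : (0:ℝ) ≤ (2 * a * m - |b| * m) * Y ^ 2 :=
        mul_nonneg (by nlinarith) hY2
      have t3 : (0:ℝ) ≤ m * (|b| * X ^ 2 + 2 * b * X * Y + |b| * Y ^ 2) :=
        mul_nonneg hm.le e1'
      nlinarith [t1, t2, t3, e2]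
  nlinarith [key, hm]

/-- Uniform bound on the reference current and a load-torque-independent proportional
gain: if `|τ_L| ≤ τ_L^max` then `|x₂*| ≤ (τ_L^max + R_m|ω*|)/(n_p Φ)`, and any `k_p`
with `R_s + k_p > (n_p L_d²/(4R_m)) ((τ_L^max + R_m|ω*|)/(n_p Φ))² + |L_q - L_d||ω*|/2`
makes `R_d` positive definite, uniformly over such `τ_L`. -/
theorem pmsm_uniform_kp_bound
    (Rs Rm np Ld Lq Φ : ℝ) (hRs : 0 < Rs) (hRm : 0 < Rm) (hnp : 0 < np)
    (hLd : 0 < Ld) (hLq : 0 < Lq) (hΦ : 0 < Φ)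
    (ωs τmax : ℝ) (hτmax : 0 < τmax) :
    ∀ τL : ℝ, |τL| ≤ τmax →
      (|(τL + Rm * ωs) / (np * Φ)| ≤ (τmax + Rm * |ωs|) / (np * Φ)) ∧
      (∀ kp : ℝ,
        np * Ld ^ 2 / (4 * Rm) * ((τmax + Rm * |ωs|) / (np * Φ)) ^ 2
          + |Lq - Ld| * |ωs| / 2 < Rs + kp →
        (!![2 * Rs + 2 * kp, (Ld - Lq) * ωs, -Ld * ((τL + Rm * ωs) / (np * Φ));
            (Ld - Lq) * ωs, 2 * Rs + 2 * kp, 0;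
            -Ld * ((τL + Rm * ωs) / (np * Φ)), 0, 2 * Rm / np] :
          Matrix (Fin 3) (Fin 3) ℝ).PosDef) := by
  intro τL hτL
  have hnpΦ : 0 < np * Φ := mul_pos hnp hΦ
  set x2 : ℝ := (τL + Rm * ωs) / (np * Φ) with hx2def
  set B : ℝ := (τmax + Rm * |ωs|) / (np * Φ) with hBdef
  have hbound : |x2| ≤ B := by
    rw [hx2def, hBdef, abs_div, abs_of_pos hnpΦ]
    have hnum : |τL + Rm * ωs| ≤ τmax + Rm * |ωs| :=
      calc |τL + Rm * ωs| ≤ |τL| + |Rm * ωs| := abs_add_le _ _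
        _ ≤ τmax + Rm * |ωs| := by rw [abs_mul, abs_of_pos hRm]; linarith
    gcongr
  refine ⟨hbound, ?_⟩
  intro kp hkp
  rw [Matrix.posDef_iff_dotProduct_mulVec]
  constructor
  · ext i j
    fin_cases i <;> fin_cases j <;>
      simp [Matrix.conjTranspose_apply, Matrix.cons_val_zero, Matrix.cons_val_one,
        Matrix.head_cons, Matrix.head_fin_const]
  · intro v hv
    have hq := quad_pos_aux (Rs + kp) ((Ld - Lq) * ωs) (Ld * x2) (2 * Rm / np)
      (by positivity)
      ?_ (v 0) (v 1) (v 2) ?_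
    · convert hq using 1
      · rfl
      simp [dotProduct, Matrix.mulVec, Fin.sum_univ_three, Matrix.cons_val_zero,
        Matrix.cons_val_one, Matrix.head_cons]
      ring
    · -- |b| m + c² < 2 a m with m = 2Rm/np
      have hm : (0:ℝ) < 2 * Rm / np := by positivity
      have habs : |(Ld - Lq) * ωs| = |Lq - Ld| * |ωs| := by
        rw [abs_mul, abs_sub_comm]
      have hc : (Ld * x2) ^ 2 ≤ Ld ^ 2 * B ^ 2 := by
        have h1 : x2 ^ 2 ≤ B ^ 2 := by
          have := sq_abs x2
          nlinarith [abs_nonneg x2]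
        nlinarith [sq_nonneg Ld, sq_nonneg x2, hLd]
      have hB2 : Ld ^ 2 * B ^ 2 = (np * Ld ^ 2 / (4 * Rm) * B ^ 2) * (2 * (2 * Rm / np)) := by
        field_simp; ring
      rw [habs]
      calc |Lq - Ld| * |ωs| * (2 * Rm / np) + (Ld * x2) ^ 2
          ≤ |Lq - Ld| * |ωs| * (2 * Rm / np) + (np * Ld ^ 2 / (4 * Rm) * B ^ 2) * (2 * (2 * Rm / np)) := by
            rw [← hB2]; linarith
        _ = (|Lq - Ld| * |ωs| / 2 + np * Ld ^ 2 / (4 * Rm) * B ^ 2) * (2 * (2 * Rm / np)) := by ring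
        _ < (Rs + kp) * (2 * (2 * Rm / np)) := by
            apply mul_lt_mul_of_pos_right _ (by positivity)
            linarith
        _ = 2 * (Rs + kp) * (2 * Rm / np) := by ring
    · rintro ⟨h0, h1, h2⟩
      apply hv
      funext i; fin_cases i <;> assumption
end

section
/- (Boundedness in an exponentially-driven cascade.) Let f : ℝ^n → ℝ^n be locally Lipschitz with a radially unbounded Lyapunov function V : ℝ^n → ℝ satisfying ∇V(ξ)·f(ξ) ≤ 0 and |∇V(ξ)| ≤ c(1 + V(ξ)) for some c > 0. Let e(t) = e(0) exp(-λ t) with λ > 0 and B a constant matrix. Then every solution of ξ̇ = f(ξ) + B e(t) is bounded on [0, ∞). -/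
open Filter

/-- Boundedness in an exponentially-driven cascade: if `V` is a radially unbounded
Lyapunov function for `ξ̇ = f(ξ)` with `∇V·f ≤ 0` and `|∇V| ≤ c(1+V)`, then every
solution of `ξ̇ = f(ξ) + B e(t)` with `e(t) = exp(-λt) e₀` is bounded on `[0,∞)`. -/
theorem cascade_boundedness
    (n m : ℕ)
    (f : EuclideanSpace ℝ (Fin n) → EuclideanSpace ℝ (Fin n))
    (hf : LocallyLipschitz f)
    (V : EuclideanSpace ℝ (Fin n) → ℝ)
    (hV1 : ContDiff ℝ 1 V)
    (hVpos : V 0 = 0 ∧ ∀ ξ : EuclideanSpace ℝ (Fin n), ξ ≠ 0 → 0 < V ξ)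
    (hVrad : Tendsto V (cocompact (EuclideanSpace ℝ (Fin n))) atTop)
    (c : ℝ) (hc : 0 < c)
    (hdiss : ∀ ξ, inner ℝ (gradient V ξ) (f ξ) ≤ (0 : ℝ))
    (hgrow : ∀ ξ, ‖gradient V ξ‖ ≤ c * (1 + V ξ))
    (lam : ℝ) (hlam : 0 < lam)
    (e0 : EuclideanSpace ℝ (Fin m))
    (B : EuclideanSpace ℝ (Fin m) →L[ℝ] EuclideanSpace ℝ (Fin n))
    (ξ : ℝ → EuclideanSpace ℝ (Fin n))
    (hξ : ∀ t, 0 ≤ t →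
      HasDerivAt ξ (f (ξ t) + B (Real.exp (-lam * t) • e0)) t) :
    ∃ M : ℝ, ∀ t, 0 ≤ t → ‖ξ t‖ ≤ M := by
  -- V is nonnegative
  have hV0 : ∀ x, 0 ≤ V x := by
    intro x
    rcases eq_or_ne x 0 with h | h
    · rw [h, hVpos.1]
    · exact (hVpos.2 x h).le
  set K : ℝ := c * (‖B‖ * ‖e0‖) with hK
  have hK0 : 0 ≤ K := by positivity
  -- the composite function g t = V (ξ t)
  set g : ℝ → ℝ := fun t => V (ξ t) with hg
  have hg0 : ∀ t, 0 ≤ g t := fun t => hV0 _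
  -- derivative of g
  have hgderiv : ∀ t, 0 ≤ t → HasDerivAt g
      (inner ℝ (gradient V (ξ t)) (f (ξ t) + B (Real.exp (-lam * t) • e0)) : ℝ) t := by
    intro t ht
    have hdV : DifferentiableAt ℝ V (ξ t) := (hV1.differentiable one_ne_zero) (ξ t)
    have hFD := hdV.hasGradientAt.hasFDerivAt
    have := hFD.comp_hasDerivAt t (hξ t ht)
    exact this.congr_deriv (by simp [InnerProductSpace.toDual_apply_apply])
  -- bound the derivative of g
  have hgbound : ∀ t, 0 ≤ t →
      (inner ℝ (gradient V (ξ t)) (f (ξ t) + B (Real.exp (-lam * t) • e0)) : ℝ)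
        ≤ K * Real.exp (-lam * t) * (1 + g t) := by
    intro t ht
    rw [inner_add_right]
    have h1 := hdiss (ξ t)
    have h2 : (inner ℝ (gradient V (ξ t)) (B (Real.exp (-lam * t) • e0)) : ℝ)
        ≤ K * Real.exp (-lam * t) * (1 + g t) := by
      calc (inner ℝ (gradient V (ξ t)) (B (Real.exp (-lam * t) • e0)) : ℝ)
          ≤ ‖gradient V (ξ t)‖ * ‖B (Real.exp (-lam * t) • e0)‖ :=
            real_inner_le_norm _ _
        _ ≤ (c * (1 + g t)) * (‖B‖ * ‖Real.exp (-lam * t) • e0‖) := by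
            apply mul_le_mul (hgrow _) (B.le_opNorm _) (norm_nonneg _)
            have := hg0 t
            positivity
        _ = K * Real.exp (-lam * t) * (1 + g t) := by
            rw [norm_smul, Real.norm_eq_abs, abs_of_pos (Real.exp_pos _)]
            ring
    linarith
  -- the auxiliary function ψ
  set ψ : ℝ → ℝ := fun t => Real.log (1 + g t) + (K / lam) * Real.exp (-lam * t) with hψ
  have hψderiv : ∀ t ∈ Set.Ici (0:ℝ), HasDerivAt ψ
      ((inner ℝ (gradient V (ξ t)) (f (ξ t) + B (Real.exp (-lam * t) • e0)) : ℝ) / (1 + g t)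
        + (K / lam) * (Real.exp (-lam * t) * (-lam))) t := by
    intro t ht
    have h1 : (1 : ℝ) + g t ≠ 0 := by have := hg0 t; positivity
    have hlog : HasDerivAt (fun t => Real.log (1 + g t))
        ((inner ℝ (gradient V (ξ t)) (f (ξ t) + B (Real.exp (-lam * t) • e0)) : ℝ) / (1 + g t)) t := by
      have := ((hgderiv t ht).const_add 1).log h1
      simpa using this
    have hexp : HasDerivAt (fun t => (K / lam) * Real.exp (-lam * t))
        ((K / lam) * (Real.exp (-lam * t) * (-lam))) t := by
      have : HasDerivAt (fun t : ℝ => Real.exp (-lam * t)) (Real.exp (-lam * t) * (-lam)) t := by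
        have h := (hasDerivAt_id t).const_mul (-lam)
        exact (Real.hasDerivAt_exp (-lam * t)).comp t h |>.congr_deriv (by ring)
      exact this.const_mul (K / lam)
    exact hlog.add hexp
  -- ψ is antitone on [0, ∞)
  have hψanti : AntitoneOn ψ (Set.Ici (0:ℝ)) := by
    apply antitoneOn_of_deriv_nonpos (convex_Ici 0)
    · exact fun t ht => ((hψderiv t ht).continuousAt).continuousWithinAt
    · intro t ht
      rw [interior_Ici] at ht
      exact ((hψderiv t (Set.mem_Ici.2 (le_of_lt ht))).differentiableAt).differentiableWithinAt
    · intro t ht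
      rw [interior_Ici] at ht
      rw [(hψderiv t (Set.mem_Ici.2 (le_of_lt ht))).deriv]
      have h1 : (0:ℝ) < 1 + g t := by have := hg0 t; positivity
      have hb := hgbound t ht.le
      have : (inner ℝ (gradient V (ξ t)) (f (ξ t) + B (Real.exp (-lam * t) • e0)) : ℝ) / (1 + g t)
          ≤ K * Real.exp (-lam * t) := by
        rw [div_le_iff₀ h1]
        linarith
      have hKexp : (K / lam) * (Real.exp (-lam * t) * (-lam)) = -(K * Real.exp (-lam * t)) := by
        field_simp
      rw [hKexp]
      linarith
  -- hence bound for g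
  have hgle : ∀ t, 0 ≤ t → g t ≤ (1 + g 0) * Real.exp (K / lam) - 1 := by
    intro t ht
    have h1 : (0:ℝ) < 1 + g t := by have := hg0 t; positivity
    have h2 : (0:ℝ) < 1 + g 0 := by have := hg0 0; positivity
    have hψle : ψ t ≤ ψ 0 := hψanti (Set.mem_Ici.2 le_rfl) ht ht
    have hle : Real.log (1 + g t) ≤ Real.log (1 + g 0) + K / lam := by
      have hexp1 : (0:ℝ) ≤ (K / lam) * Real.exp (-lam * t) := by positivity
      have : (K / lam) * Real.exp (-lam * 0) = K / lam := by simp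
      simp only [hψ] at hψle
      rw [this] at hψle
      linarith
    have := Real.exp_le_exp.2 hle
    rw [Real.exp_log h1, Real.exp_add, Real.exp_log h2] at this
    linarith
  set A : ℝ := (1 + g 0) * Real.exp (K / lam) - 1 with hA
  -- radial unboundedness: sublevel set is bounded
  have hsub : ∀ᶠ x in cocompact (EuclideanSpace ℝ (Fin n)), A + 1 ≤ V x :=
    hVrad.eventually (eventually_ge_atTop (A + 1))
  rw [Filter.hasBasis_cocompact.eventually_iff] at hsub
  obtain ⟨S, hScomp, hS⟩ := hsub
  obtain ⟨M, hM⟩ := hScomp.isBounded.exists_norm_le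
  refine ⟨M, fun t ht => ?_⟩
  by_contra hcon
  push_neg at hcon
  have hnot : ξ t ∉ S := fun h => absurd (hM _ h) (not_le.2 hcon)
  have := hS hnot
  have := hgle t ht
  simp only [hg] at this
  linarith
end
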